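/- Let σ be the logistic squasher and d, k₀, L, n ∈ ℕ with k₀ ≥ 2d, L ≥ 2, and let δ > 0 and a, b ∈ ℝ^d with b^{(l)} − a^{(l)} ≥ 2δ for all l. There exists an explicit set of weight conditions (conditions (le7eq1)–(le7eq10b) of the paper, e.g. c_{1,1,1}^{(L−1)} ≤ −4(n+1), c_{1,k,k}^{(0)} ≤ −(2/δ)log(8d−1) for k ≤ d, c_{1,d+k,k}^{(0)} ≥ (2/δ)log(8d−1), etc.) such that the resulting L-layer logistic network f_{1,1}^{(L)} with k₀ neurons per layer satisfies, for every x ∈ [−1,1]^d: f_{1,1}^{(L)}(x) ≥ 1 − e^{−n} if x ∈ ∏_l [a^{(l)}+δ, b^{(l)}−δ], and f_{1,1}^{(L)}(x) ≤ e^{−n} if x ∉ ∏_l [a^{(l)}−δ, b^{(l)}+δ]. -/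

import Mathlib

/-- The logistic squasher. -/
noncomputable def logistic (x : ℝ) : ℝ := 1 / (1 + Real.exp (-x))

/-- A fully connected feedforward logistic network with `d` inputs and hidden
layers of width `k₀`: `net d k₀ w w0 v v0 (r-1) i x = f_{1,i}^{(r)}(x)`, where
`w, w0` are the first-layer weights `c^{(0)}` and `v r, v0 r` are the weights
`c^{(r)}` feeding layer `r+1`. -/
noncomputable def net (d k₀ : ℕ) (w : Fin k₀ → Fin d → ℝ) (w0 : Fin k₀ → ℝ)
    (v : ℕ → Fin k₀ → Fin k₀ → ℝ) (v0 : ℕ → Fin k₀ → ℝ) :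
    ℕ → Fin k₀ → (Fin d → ℝ) → ℝ
  | 0, i, x => logistic (∑ j, w i j * x j + w0 i)
  | (r + 1), i, x =>
      logistic (∑ j, v (r + 1) i j * net d k₀ w w0 v v0 r j x + v0 (r + 1) i)

/-!
Put `M = log (8d - 1)`, so that `σ ≤ 1/(8d)` on `(-∞, -M]` and `σ ≥ 1 - 1/(8d)` on `[M, ∞)`.
Each of the first `2d` neurons has one dominant weight: its pre-activation is that weight times
the signed distance of `x` to one face of the cube, up to an error `M` coming from the other
weights. So a first-layer face neuron is on when `x` lies more than `δ` beyond its face and off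
when `x` lies more than `δ` inside it. In the hidden layers every face neuron is fed back to
itself with weight `≥ 8M`, which preserves both states. The output neuron sees `c (S - 1/2)` up
to an error `1`, where `S` is the sum of the `2d` face neurons and `c ≤ -4(n + 1)`; inside the
cube `S ≤ 1/4`, outside it `S ≥ 7/8`.
-/

open Real Finset

lemma logistic_eq_sigmoid : logistic = sigmoid := by
  funext t
  rw [logistic, sigmoid_def, one_div]

namespace Real

lemma sigmoid_le_exp (t : ℝ) : sigmoid t ≤ exp t := by
  calc sigmoid t = sigmoid (-t) * exp t := by simpa using (sigmoid_mul_rexp_neg (-t)).symm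
    _ ≤ 1 * exp t := by gcongr; exact sigmoid_le_one _
    _ = exp t := one_mul _

lemma one_sub_exp_neg_le_sigmoid (t : ℝ) : 1 - exp (-t) ≤ sigmoid t := by
  have := sigmoid_le_exp (-t)
  rw [sigmoid_neg] at this
  linarith

lemma sigmoid_le_of_le_neg_log {y t : ℝ} (hy : 0 < y) (ht : t ≤ -log y) :
    sigmoid t ≤ (1 + y)⁻¹ := by
  simpa [sigmoid_def, exp_log hy] using sigmoid_le ht

lemma one_sub_le_sigmoid_of_log_le {y t : ℝ} (hy : 0 < y) (ht : log y ≤ t) :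
    1 - (1 + y)⁻¹ ≤ sigmoid t := by
  have := sigmoid_le_of_le_neg_log hy (neg_le_neg ht)
  rw [sigmoid_neg] at this
  linarith

end Real

lemma two_mul_le_mul_of_le_of_le {M δ g e : ℝ} (hM : 0 ≤ M) (hδ : 0 < δ)
    (hg : 2 / δ * M ≤ g) (he : δ ≤ e) : 2 * M ≤ g * e :=
  calc 2 * M = 2 / δ * M * δ := by field_simp
    _ ≤ g * e := mul_le_mul hg he hδ.le (le_trans (by positivity) hg)

section Neuron

variable {ι : Type*} [Fintype ι]

def preact (g : ι → ℝ) (g0 : ℝ) (f : ι → ℝ) : ℝ := ∑ j, g j * f j + g0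

noncomputable def neuron (g : ι → ℝ) (g0 : ℝ) (f : ι → ℝ) : ℝ := logistic (preact g g0 f)

lemma neuron_nonneg (g : ι → ℝ) (g0 : ℝ) (f : ι → ℝ) : 0 ≤ neuron g g0 f := by
  rw [neuron, logistic_eq_sigmoid]
  exact sigmoid_nonneg _

lemma abs_neuron_le_one (g : ι → ℝ) (g0 : ℝ) (f : ι → ℝ) : |neuron g g0 f| ≤ 1 := by
  rw [abs_of_nonneg (neuron_nonneg g g0 f), neuron, logistic_eq_sigmoid]
  exact sigmoid_le_one _

variable {g f : ι → ℝ} {g0 θ : ℝ}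

lemma abs_preact_sub_le {s : Finset ι} {k : ι} (hk : k ∈ s) {B₀ B : ℝ}
    (hf : ∀ j, |f j| ≤ 1) (hbias : |g0 + θ * g k| ≤ B₀)
    (hs : ∀ j ∈ s, j ≠ k → |g j - g k| ≤ B) (hsc : ∀ j ∉ s, |g j| ≤ B) :
    |preact g g0 f - g k * (∑ j ∈ s, f j - θ)| ≤ B₀ + (Fintype.card ι - 1) * B := by
  classical
  -- subtracting `g k` on the block `s` leaves weights `h` that vanish at `k`
  set h : ι → ℝ := fun j => if j ∈ s then g j - g k else g j
  have hh : ∀ j ∈ univ.erase k, |h j * f j| ≤ B := by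
    intro j hj
    have hjk := ne_of_mem_erase hj
    rw [abs_mul]
    refine le_trans (mul_le_of_le_one_right (abs_nonneg _) (hf j)) ?_
    by_cases hjs : j ∈ s
    · simpa [h, hjs] using hs j hjs hjk
    · simpa [h, hjs] using hsc j hjs
  have hsplit : preact g g0 f - g k * (∑ j ∈ s, f j - θ)
      = (g0 + θ * g k) + ∑ j ∈ univ.erase k, h j * f j := by
    have hterm : ∀ j, h j * f j = g j * f j - if j ∈ s then g k * f j else 0 := by
      intro j
      by_cases hjs : j ∈ s <;> simp only [h, hjs, if_true, if_false] <;> ring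
    rw [sum_erase _ (by simp [h, hk]), sum_congr rfl fun j _ => hterm j, sum_sub_distrib,
      Fintype.sum_ite_mem, ← mul_sum, preact]
    ring
  have hcard : ((univ.erase k).card : ℝ) = Fintype.card ι - 1 := by
    rw [card_erase_of_mem (mem_univ k), card_univ,
      Nat.cast_pred (Fintype.card_pos_iff.2 ⟨k⟩)]
  rw [hsplit]
  calc |(g0 + θ * g k) + ∑ j ∈ univ.erase k, h j * f j|
      ≤ |g0 + θ * g k| + ∑ j ∈ univ.erase k, |h j * f j| :=
        (abs_add_le _ _).trans (by gcongr; exact abs_sum_le_sum_abs _ _)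
    _ ≤ B₀ + (univ.erase k).card • B := add_le_add hbias (sum_le_card_nsmul _ _ _ hh)
    _ = B₀ + (Fintype.card ι - 1) * B := by rw [nsmul_eq_mul, hcard]

lemma abs_preact_sub_le_of_dominant {k : ι} {M : ℝ} (hf : ∀ j, |f j| ≤ 1)
    (hbias : |g0 + θ * g k| ≤ M / Fintype.card ι)
    (hoff : ∀ j, j ≠ k → |g j| ≤ M / Fintype.card ι) :
    |preact g g0 f - g k * (f k - θ)| ≤ M := by
  have : Nonempty ι := ⟨k⟩
  have hcard : (Fintype.card ι : ℝ) ≠ 0 := Nat.cast_ne_zero.2 Fintype.card_ne_zero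
  have := abs_preact_sub_le (mem_singleton_self k) hf hbias
    (fun j hj hjk => absurd (mem_singleton.1 hj) hjk)
    (fun j hj => hoff j (by simpa using hj))
  rw [sum_singleton] at this
  calc _ ≤ _ := this
    _ = M := by field_simp; ring

variable {k : ι} {y : ℝ}

lemma neuron_le_of_dominant (hy : 0 < y) (hf : ∀ j, |f j| ≤ 1)
    (hbias : |g0 + θ * g k| ≤ log y / Fintype.card ι)
    (hoff : ∀ j, j ≠ k → |g j| ≤ log y / Fintype.card ι)
    (h : g k * (f k - θ) ≤ -2 * log y) : neuron g g0 f ≤ (1 + y)⁻¹ := by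
  have := abs_le.1 (abs_preact_sub_le_of_dominant hf hbias hoff)
  rw [neuron, logistic_eq_sigmoid]
  exact sigmoid_le_of_le_neg_log hy (by linarith)

lemma le_neuron_of_dominant (hy : 0 < y) (hf : ∀ j, |f j| ≤ 1)
    (hbias : |g0 + θ * g k| ≤ log y / Fintype.card ι)
    (hoff : ∀ j, j ≠ k → |g j| ≤ log y / Fintype.card ι)
    (h : 2 * log y ≤ g k * (f k - θ)) : 1 - (1 + y)⁻¹ ≤ neuron g g0 f := by
  have := abs_le.1 (abs_preact_sub_le_of_dominant hf hbias hoff)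
  rw [neuron, logistic_eq_sigmoid]
  exact one_sub_le_sigmoid_of_log_le hy (by linarith)

lemma neuron_le_of_selfLoop (hy : 7 ≤ y) (hf : ∀ j, |f j| ≤ 1)
    (hdiag : 8 * log y ≤ g k) (hbias : |g0 + 1 / 2 * g k| ≤ log y / Fintype.card ι)
    (hoff : ∀ j, j ≠ k → |g j| ≤ log y / Fintype.card ι) (hlow : f k ≤ (1 + y)⁻¹) :
    neuron g g0 f ≤ (1 + y)⁻¹ := by
  have hlog : 0 ≤ log y := log_nonneg (by linarith)
  have hκ : (1 + y)⁻¹ ≤ 1 / 8 := by rw [one_div]; gcongr; linarith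
  refine neuron_le_of_dominant (by linarith) hf hbias hoff ?_
  nlinarith

lemma le_neuron_of_selfLoop (hy : 7 ≤ y) (hf : ∀ j, |f j| ≤ 1)
    (hdiag : 8 * log y ≤ g k) (hbias : |g0 + 1 / 2 * g k| ≤ log y / Fintype.card ι)
    (hoff : ∀ j, j ≠ k → |g j| ≤ log y / Fintype.card ι) (hhigh : 1 - (1 + y)⁻¹ ≤ f k) :
    1 - (1 + y)⁻¹ ≤ neuron g g0 f := by
  have hlog : 0 ≤ log y := log_nonneg (by linarith)
  have hκ : (1 + y)⁻¹ ≤ 1 / 8 := by rw [one_div]; gcongr; linarith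
  refine le_neuron_of_dominant (by linarith) hf hbias hoff ?_
  nlinarith

end Neuron

section Output

variable {ι : Type*} [Fintype ι] {g f : ι → ℝ} {g0 : ℝ} {s : Finset ι} {k : ι}

lemma abs_preact_sub_le_one (hk : k ∈ s) (hf : ∀ j, |f j| ≤ 1) (hbias : |g0 + 1 / 2 * g k| ≤ 1 / 2)
    (hs : ∀ j ∈ s, j ≠ k → |g j - g k| ≤ 1 / (2 * Fintype.card ι))
    (hsc : ∀ j ∉ s, |g j| ≤ 1 / (2 * Fintype.card ι)) :
    |preact g g0 f - g k * (∑ j ∈ s, f j - 1 / 2)| ≤ 1 := by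
  have : Nonempty ι := ⟨k⟩
  have hcard : (0 : ℝ) < Fintype.card ι := Nat.cast_pos.2 Fintype.card_pos
  calc _ ≤ 1 / 2 + ((Fintype.card ι : ℝ) - 1) * (1 / (2 * Fintype.card ι)) :=
        abs_preact_sub_le hk hf hbias hs hsc
    _ = 1 - 1 / (2 * (Fintype.card ι : ℝ)) := by field_simp; ring
    _ ≤ 1 := by linarith [show 0 < 1 / (2 * (Fintype.card ι : ℝ)) by positivity]

variable {n : ℝ}

lemma one_sub_exp_neg_le_neuron (hn : 0 ≤ n) (hc : g k ≤ -4 * (n + 1))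
    (hdev : |preact g g0 f - g k * (∑ j ∈ s, f j - 1 / 2)| ≤ 1) (hS : ∑ j ∈ s, f j ≤ 1 / 4) :
    1 - exp (-n) ≤ neuron g g0 f := by
  have hpre : n ≤ preact g g0 f := by nlinarith [(abs_le.1 hdev).1]
  rw [neuron, logistic_eq_sigmoid]
  calc 1 - exp (-n) ≤ 1 - exp (-preact g g0 f) := by gcongr
    _ ≤ sigmoid (preact g g0 f) := one_sub_exp_neg_le_sigmoid _

lemma neuron_le_exp_neg (hn : 0 ≤ n) (hc : g k ≤ -4 * (n + 1))
    (hdev : |preact g g0 f - g k * (∑ j ∈ s, f j - 1 / 2)| ≤ 1) (hS : 7 / 8 ≤ ∑ j ∈ s, f j) :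
    neuron g g0 f ≤ exp (-n) := by
  have hpre : preact g g0 f ≤ -n := by nlinarith [(abs_le.1 hdev).2]
  rw [neuron, logistic_eq_sigmoid]
  exact (sigmoid_le_exp _).trans (exp_le_exp.2 hpre)

end Output

section Net

variable {d k₀ : ℕ} {w : Fin k₀ → Fin d → ℝ} {w0 : Fin k₀ → ℝ}
  {v : ℕ → Fin k₀ → Fin k₀ → ℝ} {v0 : ℕ → Fin k₀ → ℝ} {x : Fin d → ℝ} {y : ℝ}

lemma net_zero (i : Fin k₀) (x : Fin d → ℝ) :
    net d k₀ w w0 v v0 0 i x = neuron (w i) (w0 i) x :=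
  rfl

lemma net_succ (r : ℕ) (i : Fin k₀) (x : Fin d → ℝ) :
    net d k₀ w w0 v v0 (r + 1) i x
      = neuron (v (r + 1) i) (v0 (r + 1) i) (fun j => net d k₀ w w0 v v0 r j x) :=
  rfl

lemma net_nonneg (r : ℕ) (i : Fin k₀) (x : Fin d → ℝ) : 0 ≤ net d k₀ w w0 v v0 r i x := by
  cases r <;> exact neuron_nonneg _ _ _

lemma abs_net_le_one (r : ℕ) (i : Fin k₀) (x : Fin d → ℝ) :
    |net d k₀ w w0 v v0 r i x| ≤ 1 := by
  cases r <;> exact abs_neuron_le_one _ _ _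

/-- Conditions (le7eq7)–(le7eq10b) of the paper on the first layer: neuron `l` fires when
`x l < a l` and neuron `d + l` when `x l > b l`. -/
structure IsFaceDetector (hk₀ : 2 * d ≤ k₀) (w : Fin k₀ → Fin d → ℝ) (w0 : Fin k₀ → ℝ)
    (a b : Fin d → ℝ) (δ y : ℝ) : Prop where
  lower_diag : ∀ l : Fin d, w ⟨l, by omega⟩ l ≤ -(2 / δ) * log y
  lower_bias : ∀ l : Fin d, |w0 ⟨l, by omega⟩ + a l * w ⟨l, by omega⟩ l| ≤ log y / d
  lower_off : ∀ l j : Fin d, j ≠ l → |w ⟨l, by omega⟩ j| ≤ log y / d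
  upper_diag : ∀ l : Fin d, 2 / δ * log y ≤ w ⟨d + l, by omega⟩ l
  upper_bias : ∀ l : Fin d, |w0 ⟨d + l, by omega⟩ + b l * w ⟨d + l, by omega⟩ l| ≤ log y / d
  upper_off : ∀ l j : Fin d, j ≠ l → |w ⟨d + l, by omega⟩ j| ≤ log y / d

section HiddenLayers

variable {R : ℕ} {k : Fin k₀}

lemma net_le_of_net_zero_le (hy : 7 ≤ y)
    (hdiag : ∀ r, 1 ≤ r → r ≤ R → 8 * log y ≤ v r k k)
    (hbias : ∀ r, 1 ≤ r → r ≤ R → |v0 r k + 1 / 2 * v r k k| ≤ log y / k₀)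
    (hoff : ∀ r, 1 ≤ r → r ≤ R → ∀ j, j ≠ k → |v r k j| ≤ log y / k₀)
    (h0 : net d k₀ w w0 v v0 0 k x ≤ (1 + y)⁻¹) :
    ∀ r ≤ R, net d k₀ w w0 v v0 r k x ≤ (1 + y)⁻¹
  | 0, _ => h0
  | r + 1, hr => by
    rw [net_succ]
    exact neuron_le_of_selfLoop hy (abs_net_le_one r · x) (hdiag _ (by omega) hr)
      (by simpa using hbias _ (by omega) hr) (by simpa using hoff _ (by omega) hr)
      (net_le_of_net_zero_le hy hdiag hbias hoff h0 r (by omega))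

lemma le_net_of_le_net_zero (hy : 7 ≤ y)
    (hdiag : ∀ r, 1 ≤ r → r ≤ R → 8 * log y ≤ v r k k)
    (hbias : ∀ r, 1 ≤ r → r ≤ R → |v0 r k + 1 / 2 * v r k k| ≤ log y / k₀)
    (hoff : ∀ r, 1 ≤ r → r ≤ R → ∀ j, j ≠ k → |v r k j| ≤ log y / k₀)
    (h0 : 1 - (1 + y)⁻¹ ≤ net d k₀ w w0 v v0 0 k x) :
    ∀ r ≤ R, 1 - (1 + y)⁻¹ ≤ net d k₀ w w0 v v0 r k x
  | 0, _ => h0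
  | r + 1, hr => by
    rw [net_succ]
    exact le_neuron_of_selfLoop hy (abs_net_le_one r · x) (hdiag _ (by omega) hr)
      (by simpa using hbias _ (by omega) hr) (by simpa using hoff _ (by omega) hr)
      (le_net_of_le_net_zero hy hdiag hbias hoff h0 r (by omega))

end HiddenLayers

section FirstLayer

variable {hk₀ : 2 * d ≤ k₀} {a b : Fin d → ℝ} {δ : ℝ}

lemma net_zero_le_of_mem_cube (hW : IsFaceDetector hk₀ w w0 a b δ y) (hy : 1 ≤ y) (hδ : 0 < δ)
    (hx : ∀ j, |x j| ≤ 1) (hin : ∀ l, x l ∈ Set.Icc (a l + δ) (b l - δ))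
    (k : Fin k₀) (hk : k.val < 2 * d) : net d k₀ w w0 v v0 0 k x ≤ (1 + y)⁻¹ := by
  have hlog : 0 ≤ log y := log_nonneg hy
  rw [net_zero]
  rcases lt_or_ge k.val d with hkd | hkd
  · obtain ⟨l, hl⟩ : ∃ l : Fin d, (l : ℕ) = k := ⟨⟨k, hkd⟩, rfl⟩
    rw [show k = ⟨l, by omega⟩ from Fin.ext hl.symm]
    have := two_mul_le_mul_of_le_of_le hlog hδ (g := -w ⟨l, by omega⟩ l)
      (by linarith [hW.lower_diag l]) (show δ ≤ x l - a l by linarith [(hin l).1])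
    exact neuron_le_of_dominant (θ := a l) (by linarith) hx (by simpa using hW.lower_bias l)
      (by simpa using hW.lower_off l) (by linarith)
  · obtain ⟨l, hl⟩ : ∃ l : Fin d, d + (l : ℕ) = k := ⟨⟨k - d, by omega⟩, by simp only; omega⟩
    rw [show k = ⟨d + l, by omega⟩ from Fin.ext hl.symm]
    have := two_mul_le_mul_of_le_of_le hlog hδ (hW.upper_diag l)
      (show δ ≤ b l - x l by linarith [(hin l).2])
    exact neuron_le_of_dominant (θ := b l) (by linarith) hx (by simpa using hW.upper_bias l)
      (by simpa using hW.upper_off l) (by linarith)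

lemma exists_le_net_zero_of_not_mem_cube (hW : IsFaceDetector hk₀ w w0 a b δ y) (hy : 1 ≤ y)
    (hδ : 0 < δ) (hx : ∀ j, |x j| ≤ 1) (hout : ¬ ∀ l, x l ∈ Set.Icc (a l - δ) (b l + δ)) :
    ∃ k : Fin k₀, k.val < 2 * d ∧ 1 - (1 + y)⁻¹ ≤ net d k₀ w w0 v v0 0 k x := by
  have hlog : 0 ≤ log y := log_nonneg hy
  simp only [net_zero]
  push Not at hout
  obtain ⟨l, hl⟩ := hout
  rw [Set.mem_Icc, not_and_or, not_le, not_le] at hl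
  rcases hl with hxl | hxl
  · have := two_mul_le_mul_of_le_of_le hlog hδ (g := -w ⟨l, by omega⟩ l)
      (by linarith [hW.lower_diag l]) (show δ ≤ a l - x l by linarith)
    refine ⟨⟨l, by omega⟩, by simp only; omega, ?_⟩
    exact le_neuron_of_dominant (θ := a l) (by linarith) hx (by simpa using hW.lower_bias l)
      (by simpa using hW.lower_off l) (by linarith)
  · have := two_mul_le_mul_of_le_of_le hlog hδ (hW.upper_diag l)
      (show δ ≤ x l - b l by linarith)
    refine ⟨⟨d + l, by omega⟩, by simp only; omega, ?_⟩
    exact le_neuron_of_dominant (θ := b l) (by linarith) hx (by simpa using hW.upper_bias l)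
      (by simpa using hW.upper_off l) (by linarith)

end FirstLayer

end Net

/-- Lemma 7: an explicit deep logistic network approximating the indicator of
the cube `∏ₗ [a⁽ˡ⁾, b⁽ˡ⁾]` with error `e⁻ⁿ` outside a `δ`-neighbourhood of its
boundary, under the weight conditions (le7eq1)–(le7eq10b) of the paper. -/
theorem stmt_14 (d k₀ L n : ℕ) (hd : 0 < d) (hk₀ : 2 * d ≤ k₀) (hL : 2 ≤ L)
    (δ : ℝ) (hδ : 0 < δ) (a b : Fin d → ℝ)
    (w : Fin k₀ → Fin d → ℝ) (w0 : Fin k₀ → ℝ)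
    (v : ℕ → Fin k₀ → Fin k₀ → ℝ) (v0 : ℕ → Fin k₀ → ℝ)
    -- (le7eq1)
    (h1 : v (L - 1) ⟨0, by omega⟩ ⟨0, by omega⟩ ≤ -4 * (n + 1))
    -- (le7eq2)
    (h2 : ∀ j : Fin k₀, 1 ≤ j.val → j.val < 2 * d →
      |v (L - 1) ⟨0, by omega⟩ j - v (L - 1) ⟨0, by omega⟩ ⟨0, by omega⟩| ≤ 1 / (2 * k₀))
    -- (le7eq2b)
    (h2b : ∀ j : Fin k₀, 2 * d ≤ j.val →
      |v (L - 1) ⟨0, by omega⟩ j| ≤ 1 / (2 * k₀))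
    -- (le7eq3)
    (h3 : ∀ k : Fin k₀, k.val < 2 * d →
      |v0 (L - 1) k + (1 / 2) * v (L - 1) ⟨0, by omega⟩ ⟨0, by omega⟩| ≤ 1 / 2)
    -- (le7eq4)
    (h4 : ∀ k : Fin k₀, k.val < 2 * d → ∀ r, 1 ≤ r → r ≤ L - 2 →
      8 * Real.log (8 * d - 1) ≤ v r k k)
    -- (le7eq5)
    (h5 : ∀ k : Fin k₀, k.val < 2 * d → ∀ r, 1 ≤ r → r ≤ L - 2 →
      |v0 r k + (1 / 2) * v r k k| ≤ Real.log (8 * d - 1) / k₀)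
    -- (le7eq6)
    (h6 : ∀ k : Fin k₀, k.val < 2 * d → ∀ r, 1 ≤ r → r ≤ L - 2 →
      ∀ j : Fin k₀, j ≠ k → |v r k j| ≤ Real.log (8 * d - 1) / k₀)
    -- (le7eq7)
    (h7 : ∀ k : Fin d,
      w ⟨k.val, by have := k.isLt; omega⟩ k ≤ -(2 / δ) * Real.log (8 * d - 1))
    -- (le7eq8)
    (h8 : ∀ k : Fin d,
      |w0 ⟨k.val, by have := k.isLt; omega⟩
        + a k * w ⟨k.val, by have := k.isLt; omega⟩ k| ≤ Real.log (8 * d - 1) / d)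
    -- (le7eq8b)
    (h8b : ∀ k : Fin d, ∀ j : Fin d, j ≠ k →
      |w ⟨k.val, by have := k.isLt; omega⟩ j| ≤ Real.log (8 * d - 1) / d)
    -- (le7eq9)
    (h9 : ∀ k : Fin d,
      (2 / δ) * Real.log (8 * d - 1) ≤ w ⟨d + k.val, by have := k.isLt; omega⟩ k)
    -- (le7eq10)
    (h10 : ∀ k : Fin d,
      |w0 ⟨d + k.val, by have := k.isLt; omega⟩
        + b k * w ⟨d + k.val, by have := k.isLt; omega⟩ k| ≤ Real.log (8 * d - 1) / d)
    -- (le7eq10b)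
    (h10b : ∀ k : Fin d, ∀ j : Fin d, j ≠ k →
      |w ⟨d + k.val, by have := k.isLt; omega⟩ j| ≤ Real.log (8 * d - 1) / d) :
    ∀ x : Fin d → ℝ, (∀ l, x l ∈ Set.Icc (-1 : ℝ) 1) →
      ((∀ l, x l ∈ Set.Icc (a l + δ) (b l - δ)) →
        1 - Real.exp (-(n : ℝ)) ≤ net d k₀ w w0 v v0 (L - 1) ⟨0, by omega⟩ x) ∧
      ((¬ ∀ l, x l ∈ Set.Icc (a l - δ) (b l + δ)) →
        net d k₀ w w0 v v0 (L - 1) ⟨0, by omega⟩ x ≤ Real.exp (-(n : ℝ))) := by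
  intro x hx
  have hx1 : ∀ j, |x j| ≤ 1 := fun j => abs_le.2 (hx j)
  have hy : (7 : ℝ) ≤ 8 * d - 1 := by
    have : (1 : ℝ) ≤ d := Nat.one_le_cast.2 hd
    linarith
  have hW : IsFaceDetector hk₀ w w0 a b δ (8 * d - 1) := ⟨h7, h8, h8b, h9, h10, h10b⟩
  set s : Finset (Fin k₀) := {j | j.val < 2 * d}
  have hs : ∀ j, j ∈ s ↔ j.val < 2 * d := by simp [s]
  set F : Fin k₀ → ℝ := fun j => net d k₀ w w0 v v0 (L - 2) j x
  set i₀ : Fin k₀ := ⟨0, by omega⟩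
  have hnet : net d k₀ w w0 v v0 (L - 1) i₀ x = neuron (v (L - 1) i₀) (v0 (L - 1) i₀) F := by
    rw [show L - 1 = L - 2 + 1 by omega]; rfl
  have hdev := abs_preact_sub_le_one (g := v (L - 1) i₀) (g0 := v0 (L - 1) i₀) (f := F)
    ((hs i₀).2 (by show 0 < 2 * d; omega)) (abs_net_le_one _ · x)
    (h3 i₀ (by show 0 < 2 * d; omega))
    (fun j hj hj0 => by
      simpa using h2 j (Nat.one_le_iff_ne_zero.2 fun h => hj0 (Fin.ext h)) ((hs j).1 hj))
    (fun j hj => by simpa using h2b j (not_lt.1 (mt (hs j).2 hj)))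
  rw [hnet]
  constructor
  · intro hin
    refine one_sub_exp_neg_le_neuron (Nat.cast_nonneg n) h1 hdev ?_
    calc ∑ j ∈ s, F j ≤ ∑ _j ∈ s, (1 + (8 * d - 1 : ℝ))⁻¹ := by
          refine sum_le_sum fun j hj => ?_
          have hj := (hs j).1 hj
          exact net_le_of_net_zero_le hy (h4 j hj) (h5 j hj) (h6 j hj)
            (net_zero_le_of_mem_cube hW (by linarith) hδ hx1 hin j hj) _ le_rfl
      _ = 1 / 4 := by
          rw [sum_const, Fin.card_filter_val_lt, min_eq_right hk₀, nsmul_eq_mul]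
          field_simp
          push_cast
          ring
  · intro hout
    obtain ⟨m, hm, hm0⟩ := exists_le_net_zero_of_not_mem_cube hW (by linarith) hδ hx1 hout
    refine neuron_le_exp_neg (Nat.cast_nonneg n) h1 hdev ?_
    calc (7 / 8 : ℝ) ≤ 1 - (1 + (8 * d - 1 : ℝ))⁻¹ := by
          have : (1 + (8 * d - 1 : ℝ))⁻¹ ≤ 8⁻¹ := inv_anti₀ (by norm_num) (by linarith)
          linarith
      _ ≤ F m := le_net_of_le_net_zero hy (h4 m hm) (h5 m hm) (h6 m hm) hm0 _ le_rfl
      _ ≤ ∑ j ∈ s, F j := single_le_sum (fun j _ => net_nonneg _ j x) ((hs m).2 hm)
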